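/- Let (L_N)_{N≥1} be a sequence of positive reals and α > 0. Assume τ satisfies the anticoncentration inequality: there is C_a > 0 such that μ(τ_N ∈ 𝒞) ≤ C_a L_N^{−d} for every N ≥ 1 and every unit cube 𝒞 ⊂ ℝ^d. Let A₁, A₂ : X → ℝ be bounded measurable with |μ(A₁ · (A₂ ∘ f^N)) − μ(A₁)μ(A₂)| ≤ C_f L_N^{−α} for all N ≥ 1. Let B̃₁, B̃₂ : Y → ℝ be bounded measurable, set B_i = B̃_i − ν(B̃_i), and assume |ν(B₁ · (B₂ ∘ G_t))| ≤ ψ(t) for all t ∈ ℝ^d, where ψ : ℝ^d → (0, ∞) is integrable and there are a partition of ℝ^d into unit cubes {𝒞_i} and K > 0 with sup_{𝒞_i} ψ ≤ K inf_{𝒞_i} ψ for each i. Then, with Φ_i(x, y) = A_i(x)B̃_i(y), there is C' such that |∫ Φ₁ · (Φ₂ ∘ F^N) dζ − (∫ Φ₁ dζ)(∫ Φ₂ dζ)| ≤ C' L_N^{−min(d, α)} for all N ≥ 1. -/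

import Mathlib

/-! Since `F^N(x, y) = (f^N x, G_{τ_N x} y)`, integrating over the fibre first splits the
correlation into `ν(B̃₁) ν(B̃₂) · (correlation of A₁, A₂ ∘ f^N)`, which is `O(L_N^{-α})` by mixing
of `f`, plus `μ(A₁ · A₂ ∘ f^N · ρ ∘ τ_N)` with `ρ(t) = ν(B₁ · B₂ ∘ G_t)`. As `|ρ| ≤ ψ`, `ψ` is
comparable to its mean on each unit cube of the partition and `τ_N` puts mass `O(L_N^{-d})` into
every unit cube, the second term is `O(L_N^{-d} ∫ ψ)`. When `L_N < 1` the trivial bound on the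
correlation suffices. -/

open MeasureTheory Filter Topology

noncomputable section

/-- The (closed, axis-parallel) cube in `ℝ^d` with corner `a` and side length `c`. -/
def cube {d : ℕ} (a : EuclideanSpace ℝ (Fin d)) (c : ℝ) : Set (EuclideanSpace ℝ (Fin d)) :=
  {t | ∀ i, a i ≤ t i ∧ t i ≤ a i + c}

/-- The half-open axis-parallel unit cube in `ℝ^d` with corner `a` (used for partitions). -/
def cubeHO {d : ℕ} (a : EuclideanSpace ℝ (Fin d)) : Set (EuclideanSpace ℝ (Fin d)) :=
  {t | ∀ i, a i ≤ t i ∧ t i < a i + 1}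

/-- Birkhoff sums `τ_N(x) = ∑_{n<N} τ(f^n x)` of an `ℝ^d`-valued observable. -/
def birkhoff {X : Type*} {d : ℕ} (f : X → X)
    (τ : X → EuclideanSpace ℝ (Fin d)) (N : ℕ) (x : X) : EuclideanSpace ℝ (Fin d) :=
  ∑ n ∈ Finset.range N, τ (f^[n] x)

/-- The generalized `T,T⁻¹` (skew product) map `F(x,y) = (f x, G_{τ(x)} y)`. -/
def skew {X Y : Type*} {d : ℕ} (f : X → X) (G : EuclideanSpace ℝ (Fin d) → Y → Y)
    (τ : X → EuclideanSpace ℝ (Fin d)) : X × Y → X × Y :=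
  fun q => (f q.1, G (τ q.1) q.2)

open ProbabilityTheory
open scoped ENNReal

theorem abs_mul_le_mul_of_abs_le {a b M M' : ℝ} (ha : |a| ≤ M) (hb : |b| ≤ M') :
    |a * b| ≤ M * M' := by
  rw [abs_mul]
  exact mul_le_mul ha hb (abs_nonneg _) ((abs_nonneg _).trans ha)

theorem abs_le_mul_rpow_neg_min {e C₁ C₂ B l a b : ℝ} (hl : 0 < l) (hab : 0 ≤ min a b)
    (h : |e| ≤ C₁ * l ^ (-a) + C₂ * l ^ (-b)) (hB : |e| ≤ B) :
    |e| ≤ (|C₁| + |C₂| + B) * l ^ (-min a b) := by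
  have hpow : 0 ≤ l ^ (-min a b) := Real.rpow_nonneg hl.le _
  have hB0 : 0 ≤ B := (abs_nonneg e).trans hB
  rcases le_or_gt 1 l with hl1 | hl1
  · have hC₁ : C₁ * l ^ (-a) ≤ |C₁| * l ^ (-min a b) :=
      (mul_le_mul_of_nonneg_right (le_abs_self C₁) (Real.rpow_nonneg hl.le _)).trans
        (mul_le_mul_of_nonneg_left (Real.rpow_le_rpow_of_exponent_le hl1
          (neg_le_neg (min_le_left a b))) (abs_nonneg C₁))
    have hC₂ : C₂ * l ^ (-b) ≤ |C₂| * l ^ (-min a b) :=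
      (mul_le_mul_of_nonneg_right (le_abs_self C₂) (Real.rpow_nonneg hl.le _)).trans
        (mul_le_mul_of_nonneg_left (Real.rpow_le_rpow_of_exponent_le hl1
          (neg_le_neg (min_le_right a b))) (abs_nonneg C₂))
    nlinarith
  · have hpow1 : 1 ≤ l ^ (-min a b) :=
      Real.one_le_rpow_of_pos_of_le_one_of_nonpos hl hl1.le (neg_nonpos.2 hab)
    nlinarith [abs_nonneg C₁, abs_nonneg C₂]

theorem abs_integral_le_of_abs_le {Z : Type*} [MeasurableSpace Z] {μ : Measure Z}
    [IsProbabilityMeasure μ] {w : Z → ℝ} {M : ℝ} (hw : ∀ z, |w z| ≤ M) :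
    |∫ z, w z ∂μ| ≤ M := by
  simpa using norm_integral_le_of_norm_le_const (μ := μ) (f := w) (ae_of_all _ hw)

theorem abs_integral_mul_comp_sub_le {Z : Type*} [MeasurableSpace Z] {μ : Measure Z}
    [IsProbabilityMeasure μ] {u v : Z → ℝ} {F : Z → Z} {Mu Mv : ℝ}
    (hu : ∀ z, |u z| ≤ Mu) (hv : ∀ z, |v z| ≤ Mv) :
    |(∫ z, u z * v (F z) ∂μ) - (∫ z, u z ∂μ) * ∫ z, v z ∂μ| ≤ 2 * (Mu * Mv) := by
  calc _ ≤ |∫ z, u z * v (F z) ∂μ| + |(∫ z, u z ∂μ) * ∫ z, v z ∂μ| := abs_sub _ _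
    _ ≤ Mu * Mv + Mu * Mv := add_le_add
        (abs_integral_le_of_abs_le fun z => abs_mul_le_mul_of_abs_le (hu z) (hv (F z)))
        (abs_mul_le_mul_of_abs_le (abs_integral_le_of_abs_le hu) (abs_integral_le_of_abs_le hv))
    _ = 2 * (Mu * Mv) := by ring

section SkewProduct

variable {X Y : Type*} {d : ℕ} {f : X → X} {G : EuclideanSpace ℝ (Fin d) → Y → Y}
  {τ : X → EuclideanSpace ℝ (Fin d)}

theorem birkhoff_succ (N : ℕ) (x : X) :
    birkhoff f τ (N + 1) x = τ (f^[N] x) + birkhoff f τ N x := by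
  rw [birkhoff, Finset.sum_range_succ, add_comm, birkhoff]

theorem skew_iterate_apply (hG0 : G 0 = id) (hGadd : ∀ t s, G (t + s) = G t ∘ G s)
    (N : ℕ) (q : X × Y) :
    (skew f G τ)^[N] q = (f^[N] q.1, G (birkhoff f τ N q.1) q.2) := by
  induction N with
  | zero => simp [birkhoff, hG0]
  | succ N ih =>
    rw [Function.iterate_succ_apply', ih, birkhoff_succ, hGadd, Function.iterate_succ_apply']
    rfl

variable [MeasurableSpace X] [MeasurableSpace Y]

theorem measurable_skew (hf : Measurable f)
    (hG : Measurable fun q : EuclideanSpace ℝ (Fin d) × Y => G q.1 q.2) (hτ : Measurable τ) :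
    Measurable (skew f G τ) :=
  (hf.comp measurable_fst).prodMk (hG.comp ((hτ.comp measurable_fst).prodMk measurable_snd))

end SkewProduct

section Cubes

variable {d : ℕ}

theorem cubeHO_eq_preimage_pi (a : EuclideanSpace ℝ (Fin d)) :
    cubeHO a = (MeasurableEquiv.toLp 2 (Fin d → ℝ)).symm ⁻¹'
      Set.univ.pi fun i => Set.Ico (a i) (a i + 1) := by
  ext t
  simp [cubeHO, Set.mem_Ico]

theorem measurableSet_cubeHO (a : EuclideanSpace ℝ (Fin d)) : MeasurableSet (cubeHO a) := by
  rw [cubeHO_eq_preimage_pi]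
  exact (MeasurableEquiv.measurable _) (MeasurableSet.univ_pi fun _ => measurableSet_Ico)

theorem volume_cubeHO (a : EuclideanSpace ℝ (Fin d)) : volume (cubeHO a) = 1 := by
  rw [cubeHO_eq_preimage_pi, (EuclideanSpace.volume_preserving_symm_measurableEquiv_toLp
    (Fin d)).measure_preimage (MeasurableSet.univ_pi fun _ => measurableSet_Ico).nullMeasurableSet,
    volume_pi_pi]
  simp [Real.volume_Ico]

theorem cubeHO_subset_cube (a : EuclideanSpace ℝ (Fin d)) : cubeHO a ⊆ cube a 1 :=
  fun _ ht i => ⟨(ht i).1, (ht i).2.le⟩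

end Cubes

theorem le_mul_setLIntegral_of_forall_le_mul {E : Type*} [MeasurableSpace E] {η : Measure E}
    {s : Set E} (hs : MeasurableSet s) (hηs : η s = 1) {φ : E → ℝ≥0∞} {K x : ℝ≥0∞}
    (hK : K ≠ ∞) (h : ∀ t ∈ s, x ≤ K * φ t) :
    x ≤ K * ∫⁻ t in s, φ t ∂η :=
  calc x = ∫⁻ _ in s, x ∂η := by rw [setLIntegral_const, hηs, mul_one]
    _ ≤ ∫⁻ t in s, K * φ t ∂η := setLIntegral_mono' hs h
    _ = K * ∫⁻ t in s, φ t ∂η := lintegral_const_mul' K _ hK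

theorem lintegral_comp_le_of_cubeHO_partition {X : Type*} [MeasurableSpace X] {μ : Measure X}
    {d : ℕ} (T : X → EuclideanSpace ℝ (Fin d)) (φ : EuclideanSpace ℝ (Fin d) → ℝ≥0∞)
    (a : ℕ → EuclideanSpace ℝ (Fin d)) (hcover : (⋃ i, cubeHO (a i)) = Set.univ)
    (hdisj : Pairwise fun i j => Disjoint (cubeHO (a i)) (cubeHO (a j)))
    {K c : ℝ≥0∞} (hK : K ≠ ∞)
    (hosc : ∀ i, ∀ t ∈ cubeHO (a i), ∀ t' ∈ cubeHO (a i), φ t ≤ K * φ t')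
    (hμ : ∀ i, μ (T ⁻¹' cubeHO (a i)) ≤ c) :
    ∫⁻ x, φ (T x) ∂μ ≤ K * c * ∫⁻ t, φ t :=
  calc ∫⁻ x, φ (T x) ∂μ = ∫⁻ x in ⋃ i, T ⁻¹' cubeHO (a i), φ (T x) ∂μ := by
        rw [← Set.preimage_iUnion, hcover, Set.preimage_univ, Measure.restrict_univ]
    _ ≤ ∑' i, ∫⁻ x in T ⁻¹' cubeHO (a i), φ (T x) ∂μ := lintegral_iUnion_le _ _
    _ ≤ ∑' i, ∫⁻ _ in T ⁻¹' cubeHO (a i), K * (∫⁻ t in cubeHO (a i), φ t) ∂μ :=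
        ENNReal.tsum_le_tsum fun i => setLIntegral_mono measurable_const fun _ hx =>
          le_mul_setLIntegral_of_forall_le_mul (measurableSet_cubeHO _) (volume_cubeHO _) hK
            (hosc i _ hx)
    _ ≤ ∑' i, K * c * ∫⁻ t in cubeHO (a i), φ t := ENNReal.tsum_le_tsum fun i => by
        rw [setLIntegral_const, mul_right_comm]
        gcongr
        exact hμ i
    _ = K * c * ∫⁻ t, φ t := by
        rw [ENNReal.tsum_mul_left, ← lintegral_iUnion (fun i => measurableSet_cubeHO _) hdisj,
          hcover, Measure.restrict_univ]

theorem abs_integral_mul_comp_le_of_cubeHO_partition {X : Type*} [MeasurableSpace X]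
    {μ : Measure X} [IsFiniteMeasure μ] {d : ℕ} {T : X → EuclideanSpace ℝ (Fin d)} {g : X → ℝ}
    {ρ ψ : EuclideanSpace ℝ (Fin d) → ℝ} {M K c : ℝ} (hM : 0 ≤ M) (hg : ∀ x, |g x| ≤ M)
    (hρ : ∀ t, |ρ t| ≤ ψ t) (hψ : Integrable ψ)
    (a : ℕ → EuclideanSpace ℝ (Fin d)) (hcover : (⋃ i, cubeHO (a i)) = Set.univ)
    (hdisj : Pairwise fun i j => Disjoint (cubeHO (a i)) (cubeHO (a j))) (hK : 0 ≤ K)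
    (hosc : ∀ i, ∀ t ∈ cubeHO (a i), ∀ t' ∈ cubeHO (a i), ψ t ≤ K * ψ t')
    (hT : ∀ b, (μ {x | T x ∈ cube b 1}).toReal ≤ c) :
    |∫ x, g x * ρ (T x) ∂μ| ≤ M * (K * c * ∫ t, ψ t) := by
  have hψ0 : ∀ t, 0 ≤ ψ t := fun t => (abs_nonneg _).trans (hρ t)
  have hc : 0 ≤ c := ENNReal.toReal_nonneg.trans (hT 0)
  have hI : 0 ≤ ∫ t, ψ t := integral_nonneg hψ0
  have hμ (i : ℕ) : μ (T ⁻¹' cubeHO (a i)) ≤ ENNReal.ofReal c :=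
    (measure_mono (Set.preimage_mono (cubeHO_subset_cube _))).trans
      ((ENNReal.le_ofReal_iff_toReal_le (measure_ne_top _ _) hc).2 (hT _))
  have hosc' (i : ℕ) : ∀ t ∈ cubeHO (a i), ∀ t' ∈ cubeHO (a i),
      ENNReal.ofReal (ψ t) ≤ ENNReal.ofReal K * ENNReal.ofReal (ψ t') := fun t ht t' ht' => by
    rw [← ENNReal.ofReal_mul hK]
    exact ENNReal.ofReal_le_ofReal (hosc i t ht t' ht')
  have hlint := lintegral_comp_le_of_cubeHO_partition T (fun t => ENNReal.ofReal (ψ t)) a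
    hcover hdisj ENNReal.ofReal_ne_top hosc' hμ
  rw [← ofReal_integral_eq_lintegral_ofReal hψ (ae_of_all _ hψ0)] at hlint
  rw [← Real.norm_eq_abs]
  refine (norm_integral_le_lintegral_norm _).trans
    (ENNReal.toReal_le_of_le_ofReal (by positivity) ?_)
  calc ∫⁻ x, ENNReal.ofReal ‖g x * ρ (T x)‖ ∂μ
      ≤ ∫⁻ x, ENNReal.ofReal M * ENNReal.ofReal (ψ (T x)) ∂μ := lintegral_mono fun x => by
        rw [← ENNReal.ofReal_mul hM]
        exact ENNReal.ofReal_le_ofReal (abs_mul_le_mul_of_abs_le (hg x) (hρ _))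
    _ = ENNReal.ofReal M * ∫⁻ x, ENNReal.ofReal (ψ (T x)) ∂μ :=
        lintegral_const_mul' _ _ ENNReal.ofReal_ne_top
    _ ≤ ENNReal.ofReal M * (ENNReal.ofReal K * ENNReal.ofReal c * ENNReal.ofReal (∫ t, ψ t)) := by
        gcongr
    _ = ENNReal.ofReal (M * (K * c * ∫ t, ψ t)) := by
        rw [ENNReal.ofReal_mul hM, ENNReal.ofReal_mul (by positivity), ENNReal.ofReal_mul hK]

theorem integral_mul_comp_eq_mul_add_centered {Y : Type*} [MeasurableSpace Y] {ν : Measure Y}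
    [IsProbabilityMeasure ν] {g : Y → Y} (hg : MeasurePreserving g ν ν) {B₁ B₂ : Y → ℝ}
    (h₁ : MemLp B₁ 2 ν) (h₂ : MemLp B₂ 2 ν) :
    ∫ y, B₁ y * B₂ (g y) ∂ν = (∫ y, B₁ y ∂ν) * (∫ y, B₂ y ∂ν)
      + ∫ y, (B₁ y - ∫ y, B₁ y ∂ν) * (B₂ (g y) - ∫ y, B₂ y ∂ν) ∂ν := by
  have hcomp : ∫ y, B₂ (g y) ∂ν = ∫ y, B₂ y ∂ν := by
    rw [← integral_map hg.aemeasurable (by rw [hg.map_eq]; exact h₂.aestronglyMeasurable),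
      hg.map_eq]
  have hcov := covariance_eq_sub h₁ (h₂.comp_measurePreserving hg)
  simp only [covariance, Function.comp_apply, Pi.mul_apply, hcomp] at hcov
  linarith

def fiberCorrelation {Y : Type*} [MeasurableSpace Y] {d : ℕ} (ν : Measure Y)
    (G : EuclideanSpace ℝ (Fin d) → Y → Y) (B₁ B₂ : Y → ℝ) (t : EuclideanSpace ℝ (Fin d)) : ℝ :=
  ∫ y, (B₁ y - ∫ y, B₁ y ∂ν) * (B₂ (G t y) - ∫ y, B₂ y ∂ν) ∂ν

theorem integral_skew_iterate_correlation_eq {X Y : Type*} [MeasurableSpace X]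
    [MeasurableSpace Y] {μ : Measure X} {ν : Measure Y} [IsFiniteMeasure μ]
    [IsProbabilityMeasure ν] {d : ℕ} {f : X → X} {G : EuclideanSpace ℝ (Fin d) → Y → Y}
    {τ : X → EuclideanSpace ℝ (Fin d)} (hf : Measurable f)
    (hGmeas : Measurable fun q : EuclideanSpace ℝ (Fin d) × Y => G q.1 q.2)
    (hG0 : G 0 = id) (hGadd : ∀ t s, G (t + s) = G t ∘ G s)
    (hGpres : ∀ t, MeasurePreserving (G t) ν ν) (hτ : Measurable τ)
    {A₁ A₂ : X → ℝ} (hA₁ : Measurable A₁) (hA₂ : Measurable A₂)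
    (hA₁b : ∃ M, ∀ x, |A₁ x| ≤ M) (hA₂b : ∃ M, ∀ x, |A₂ x| ≤ M)
    {B₁ B₂ : Y → ℝ} (hB₁ : Measurable B₁) (hB₂ : Measurable B₂)
    (hB₁b : ∃ M, ∀ y, |B₁ y| ≤ M) (hB₂b : ∃ M, ∀ y, |B₂ y| ≤ M) (N : ℕ) :
    (∫ q, (A₁ q.1 * B₁ q.2) * (A₂ ((skew f G τ)^[N] q).1 * B₂ ((skew f G τ)^[N] q).2)
        ∂(μ.prod ν)) - (∫ q, A₁ q.1 * B₁ q.2 ∂(μ.prod ν)) * ∫ q, A₂ q.1 * B₂ q.2 ∂(μ.prod ν)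
      = (∫ y, B₁ y ∂ν) * (∫ y, B₂ y ∂ν)
          * ((∫ x, A₁ x * A₂ (f^[N] x) ∂μ) - (∫ x, A₁ x ∂μ) * ∫ x, A₂ x ∂μ)
        + ∫ x, A₁ x * A₂ (f^[N] x) * fiberCorrelation ν G B₁ B₂ (birkhoff f τ N x) ∂μ := by
  obtain ⟨M₁, hM₁⟩ := hA₁b
  obtain ⟨M₂, hM₂⟩ := hA₂b
  obtain ⟨M₃, hM₃⟩ := hB₁b
  obtain ⟨M₄, hM₄⟩ := hB₂b
  set m := (∫ y, B₁ y ∂ν) * ∫ y, B₂ y ∂ν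
  set g := fun x => A₁ x * A₂ (f^[N] x)
  set ρ := fiberCorrelation ν G B₁ B₂
  have hH : Integrable (fun q : X × Y => (A₁ q.1 * B₁ q.2)
      * (A₂ ((skew f G τ)^[N] q).1 * B₂ ((skew f G τ)^[N] q).2)) (μ.prod ν) := by
    refine Integrable.of_bound ?_ (M₁ * M₃ * (M₂ * M₄)) (ae_of_all _ fun q =>
      abs_mul_le_mul_of_abs_le (abs_mul_le_mul_of_abs_le (hM₁ _) (hM₃ _))
        (abs_mul_le_mul_of_abs_le (hM₂ _) (hM₄ _)))
    have hskew := (measurable_skew hf hGmeas hτ).iterate N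
    fun_prop
  have hfiber (x : X) : ∫ y, (A₁ x * B₁ y)
      * (A₂ ((skew f G τ)^[N] (x, y)).1 * B₂ ((skew f G τ)^[N] (x, y)).2) ∂ν
      = g x * (m + ρ (birkhoff f τ N x)) := by
    have hB (B : Y → ℝ) (hB : Measurable B) (M : ℝ) (hM : ∀ y, |B y| ≤ M) : MemLp B 2 ν :=
      MemLp.of_bound hB.aestronglyMeasurable M (ae_of_all _ hM)
    have := integral_mul_comp_eq_mul_add_centered (hGpres (birkhoff f τ N x))
      (hB _ hB₁ _ hM₃) (hB _ hB₂ _ hM₄)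
    rw [show m + ρ (birkhoff f τ N x) = _ from this.symm, ← integral_const_mul]
    simp only [skew_iterate_apply hG0 hGadd, g]
    congr 1
    ext y
    ring
  have hg : Integrable g μ := Integrable.of_bound (by fun_prop) (M₁ * M₂)
    (ae_of_all _ fun x => abs_mul_le_mul_of_abs_le (hM₁ _) (hM₂ _))
  -- Fubini makes `g * (m + ρ ∘ τ_N)` integrable, which spares bounding `ρ` itself.
  have hgρ : ∫ x, g x * ρ (birkhoff f τ N x) ∂μ
      = ∫ x, g x * (m + ρ (birkhoff f τ N x)) ∂μ - m * ∫ x, g x ∂μ := by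
    rw [← integral_const_mul, ← integral_sub (hH.integral_prod_left.congr (ae_of_all _ hfiber))
      (hg.const_mul m)]
    congr 1
    ext x
    ring
  rw [integral_prod _ hH]
  simp only [hfiber]
  rw [integral_prod_mul, integral_prod_mul, hgρ]
  ring

theorem stmt_4_general
    {X Y : Type*} [MeasurableSpace X] [MeasurableSpace Y]
    (μ : Measure X) (ν : Measure Y)
    [IsProbabilityMeasure μ] [IsProbabilityMeasure ν]
    {d : ℕ}
    (f : X → X) (hf : MeasurePreserving f μ μ)
    (G : EuclideanSpace ℝ (Fin d) → Y → Y)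
    (hGmeas : Measurable fun q : EuclideanSpace ℝ (Fin d) × Y => G q.1 q.2)
    (hG0 : G 0 = id)
    (hGadd : ∀ t s, G (t + s) = G t ∘ G s)
    (hGpres : ∀ t, MeasurePreserving (G t) ν ν)
    (τ : X → EuclideanSpace ℝ (Fin d)) (hτmeas : Measurable τ)
    (L : ℕ → ℝ) (hL : ∀ N, 0 < L N) (α : ℝ) (hα : 0 < α)
    (Ca : ℝ)
    -- anticoncentration inequality for τ
    (hanti : ∀ N : ℕ, 1 ≤ N → ∀ a : EuclideanSpace ℝ (Fin d),
      (μ {x | birkhoff f τ N x ∈ cube a 1}).toReal ≤ Ca * (L N) ^ (-(d : ℝ)))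
    (A₁ A₂ : X → ℝ)
    (hA₁ : Measurable A₁) (hA₂ : Measurable A₂)
    (hA₁b : ∃ M, ∀ x, |A₁ x| ≤ M) (hA₂b : ∃ M, ∀ x, |A₂ x| ≤ M)
    (Cf : ℝ)
    -- mixing of f with rate L_N^{-α}
    (hfmix : ∀ N : ℕ, 1 ≤ N →
      |(∫ x, A₁ x * A₂ (f^[N] x) ∂μ) - (∫ x, A₁ x ∂μ) * ∫ x, A₂ x ∂μ|
        ≤ Cf * (L N) ^ (-α))
    (B₁' B₂' : Y → ℝ) (hB₁' : Measurable B₁') (hB₂' : Measurable B₂')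
    (hB₁b : ∃ M, ∀ y, |B₁' y| ≤ M) (hB₂b : ∃ M, ∀ y, |B₂' y| ≤ M)
    (ψ : EuclideanSpace ℝ (Fin d) → ℝ)
    (hψint : Integrable ψ)
    -- ψ oscillates boundedly on the cubes of a partition of ℝ^d into unit cubes
    (hψosc : ∃ (a : ℕ → EuclideanSpace ℝ (Fin d)) (K : ℝ), 0 < K ∧
      (⋃ i, cubeHO (a i)) = Set.univ ∧
      (Pairwise fun i j => Disjoint (cubeHO (a i)) (cubeHO (a j))) ∧
      ∀ i, ∀ t ∈ cubeHO (a i), ∀ t' ∈ cubeHO (a i), ψ t ≤ K * ψ t')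
    -- fiber correlation bound for the centered observables
    (hGcorr : ∀ t : EuclideanSpace ℝ (Fin d),
      |∫ y, (B₁' y - ∫ y, B₁' y ∂ν) * ((B₂' (G t y)) - ∫ y, B₂' y ∂ν) ∂ν| ≤ ψ t) :
    ∃ C' : ℝ, ∀ N : ℕ, 1 ≤ N →
      |(∫ q, (A₁ q.1 * B₁' q.2) * (A₂ ((skew f G τ)^[N] q).1 * B₂' ((skew f G τ)^[N] q).2)
          ∂(μ.prod ν))
        - (∫ q, A₁ q.1 * B₁' q.2 ∂(μ.prod ν)) * ∫ q, A₂ q.1 * B₂' q.2 ∂(μ.prod ν)|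
        ≤ C' * (L N) ^ (-(min (d : ℝ) α)) := by
  obtain ⟨x₀⟩ := nonempty_of_isProbabilityMeasure μ
  obtain ⟨M₁, hM₁⟩ := hA₁b
  obtain ⟨M₂, hM₂⟩ := hA₂b
  obtain ⟨M₃, hM₃⟩ := hB₁b
  obtain ⟨M₄, hM₄⟩ := hB₂b
  obtain ⟨a, K, hK, hcover, hdisj, hosc⟩ := hψosc
  have hM : 0 ≤ M₁ * M₂ :=
    mul_nonneg ((abs_nonneg _).trans (hM₁ x₀)) ((abs_nonneg _).trans (hM₂ x₀))
  set m := (∫ y, B₁' y ∂ν) * ∫ y, B₂' y ∂ν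
  refine ⟨|M₁ * M₂ * (K * Ca * ∫ t, ψ t)| + |(|m| * Cf)| + 2 * (M₁ * M₃ * (M₂ * M₄)),
    fun N hN => abs_le_mul_rpow_neg_min (hL N) (le_min (Nat.cast_nonneg d) hα.le) ?_
      (abs_integral_mul_comp_sub_le
        (fun q : X × Y => abs_mul_le_mul_of_abs_le (hM₁ q.1) (hM₃ q.2))
        (fun q : X × Y => abs_mul_le_mul_of_abs_le (hM₂ q.1) (hM₄ q.2)))⟩
  have hresidual := abs_integral_mul_comp_le_of_cubeHO_partition (T := birkhoff f τ N)
    (ρ := fiberCorrelation ν G B₁' B₂') hM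
    (fun x => abs_mul_le_mul_of_abs_le (hM₁ x) (hM₂ (f^[N] x))) hGcorr hψint a hcover hdisj
    hK.le hosc (hanti N hN)
  rw [integral_skew_iterate_correlation_eq hf.measurable hGmeas hG0 hGadd hGpres hτmeas hA₁ hA₂
    ⟨M₁, hM₁⟩ ⟨M₂, hM₂⟩ hB₁' hB₂' ⟨M₃, hM₃⟩ ⟨M₄, hM₄⟩]
  calc _ ≤ |m| * |(∫ x, A₁ x * A₂ (f^[N] x) ∂μ) - (∫ x, A₁ x ∂μ) * ∫ x, A₂ x ∂μ|
        + |∫ x, A₁ x * A₂ (f^[N] x) * fiberCorrelation ν G B₁' B₂' (birkhoff f τ N x) ∂μ| :=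
        (abs_add_le _ _).trans_eq (by rw [abs_mul])
    _ ≤ |m| * (Cf * L N ^ (-α)) + M₁ * M₂ * (K * (Ca * L N ^ (-(d : ℝ))) * ∫ t, ψ t) :=
        add_le_add (mul_le_mul_of_nonneg_left (hfmix N hN) (abs_nonneg m)) hresidual
    _ = M₁ * M₂ * (K * Ca * ∫ t, ψ t) * L N ^ (-(d : ℝ)) + |m| * Cf * L N ^ (-α) := by ring

/-- Theorem 4.6 of the paper: if `f` mixes with rate `L_N^{-α}`, `τ` satisfies the
anticoncentration inequality, and the correlations of the (centered) fiber observables are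
dominated by an integrable function `ψ` which oscillates boundedly on unit cubes, then the
correlations of the product observables decay like `L_N^{-min(d,α)}`. -/
theorem stmt_4
    {X Y : Type*} [MeasurableSpace X] [MeasurableSpace Y]
    (μ : Measure X) (ν : Measure Y)
    [IsProbabilityMeasure μ] [IsProbabilityMeasure ν]
    {d : ℕ}
    (f : X → X) (hf : MeasurePreserving f μ μ)
    (G : EuclideanSpace ℝ (Fin d) → Y → Y)
    (hGmeas : Measurable fun q : EuclideanSpace ℝ (Fin d) × Y => G q.1 q.2)
    (hG0 : G 0 = id)
    (hGadd : ∀ t s, G (t + s) = G t ∘ G s)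
    (hGpres : ∀ t, MeasurePreserving (G t) ν ν)
    (τ : X → EuclideanSpace ℝ (Fin d)) (hτmeas : Measurable τ)
    (hτbdd : ∃ M, ∀ x, ‖τ x‖ ≤ M)
    (L : ℕ → ℝ) (hL : ∀ N, 0 < L N) (α : ℝ) (hα : 0 < α)
    (Ca : ℝ) (hCa : 0 < Ca)
    -- anticoncentration inequality for τ
    (hanti : ∀ N : ℕ, 1 ≤ N → ∀ a : EuclideanSpace ℝ (Fin d),
      (μ {x | birkhoff f τ N x ∈ cube a 1}).toReal ≤ Ca * (L N) ^ (-(d : ℝ)))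
    (A₁ A₂ : X → ℝ)
    (hA₁ : Measurable A₁) (hA₂ : Measurable A₂)
    (hA₁b : ∃ M, ∀ x, |A₁ x| ≤ M) (hA₂b : ∃ M, ∀ x, |A₂ x| ≤ M)
    (Cf : ℝ)
    -- mixing of f with rate L_N^{-α}
    (hfmix : ∀ N : ℕ, 1 ≤ N →
      |(∫ x, A₁ x * A₂ (f^[N] x) ∂μ) - (∫ x, A₁ x ∂μ) * ∫ x, A₂ x ∂μ|
        ≤ Cf * (L N) ^ (-α))
    (B₁' B₂' : Y → ℝ) (hB₁' : Measurable B₁') (hB₂' : Measurable B₂')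
    (hB₁b : ∃ M, ∀ y, |B₁' y| ≤ M) (hB₂b : ∃ M, ∀ y, |B₂' y| ≤ M)
    (ψ : EuclideanSpace ℝ (Fin d) → ℝ) (hψpos : ∀ t, 0 < ψ t)
    (hψint : Integrable ψ)
    -- ψ oscillates boundedly on the cubes of a partition of ℝ^d into unit cubes
    (hψosc : ∃ (a : ℕ → EuclideanSpace ℝ (Fin d)) (K : ℝ), 0 < K ∧
      (⋃ i, cubeHO (a i)) = Set.univ ∧
      (Pairwise fun i j => Disjoint (cubeHO (a i)) (cubeHO (a j))) ∧
      ∀ i, ∀ t ∈ cubeHO (a i), ∀ t' ∈ cubeHO (a i), ψ t ≤ K * ψ t')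
    -- fiber correlation bound for the centered observables
    (hGcorr : ∀ t : EuclideanSpace ℝ (Fin d),
      |∫ y, (B₁' y - ∫ y, B₁' y ∂ν) * ((B₂' (G t y)) - ∫ y, B₂' y ∂ν) ∂ν| ≤ ψ t) :
    ∃ C' : ℝ, ∀ N : ℕ, 1 ≤ N →
      |(∫ q, (A₁ q.1 * B₁' q.2) * (A₂ ((skew f G τ)^[N] q).1 * B₂' ((skew f G τ)^[N] q).2)
          ∂(μ.prod ν))
        - (∫ q, A₁ q.1 * B₁' q.2 ∂(μ.prod ν)) * ∫ q, A₂ q.1 * B₂' q.2 ∂(μ.prod ν)|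
        ≤ C' * (L N) ^ (-(min (d : ℝ) α)) :=
  stmt_4_general μ ν f hf G hGmeas hG0 hGadd hGpres τ hτmeas L hL α hα Ca hanti A₁ A₂ hA₁ hA₂ hA₁b
    hA₂b Cf hfmix B₁' B₂' hB₁' hB₂' hB₁b hB₂b ψ hψint hψosc hGcorr

end
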